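/- arXiv:1807.11100 — 3 statements merged into one kernel-verified Lean document; each statement's English description precedes it below -/
import Mathlib

section
/- Let α > 0 and let w(θ, t) = A (sin(3θ/t))^{t/3} for θ ∈ (0, tπ/6) and t ∈ (0, t₀], where t₀ < min(3, 6/(1 + 1/α)). Then there exist constants A₀ > 0 and ε₀ > 0 depending only on t₀ and α such that for all A ≥ A₀, w_t − α w^{1+1/α} (w_{θθ} + w) ≥ ε₀ (sin(3θ/t))^{((2α+1)/(3α))t − 2} ≥ 0 on {(θ,t) : 0 < θ < tπ/6, 0 < t < t₀}. -/
/-! Write `s = sin (3θ/t)` and `p = (2α+1)t/(3α) - 2`. Since `w = A s^(t/3)` has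
`w_θθ + w = A (1 - 3/t) s^(t/3-2)`, the nonlinear term is `-α (3/t - 1) A^(2+1/α) s^p`:
it has the right sign and is superlinear in `A`. The time derivative is
`(A/3) (s^(t/3) log s - x cot x · s^(t/3))` with `x = 3θ/t ∈ (0, π/2)`; using `x cot x ≤ 1` and
`s^δ log (1/s) ≤ 1/(eδ)` for the gap `δ = 2 - t₀(1+1/α)/3 > 0` between `t/3` and `p`, it is at
least `-(A/3)(1 + 1/(eδ)) s^p`, which is only linear in `A`. -/

open Real Filter Topology

lemma rpow_mul_neg_log_le {y δ : ℝ} (hy : 0 < y) (hδ : 0 < δ) :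
    y ^ δ * -log y ≤ (δ * exp 1)⁻¹ := by
  have hyδ : 0 < y ^ δ := rpow_pos_of_pos hy δ
  have h := log_le_sub_one_of_pos (x := (exp 1 * y ^ δ)⁻¹) (by positivity)
  rw [log_inv, log_mul (exp_pos 1).ne' hyδ.ne', log_exp, log_rpow hy] at h
  have hδlog : δ * -log y ≤ (exp 1 * y ^ δ)⁻¹ := by linarith
  calc y ^ δ * -log y = y ^ δ / δ * (δ * -log y) := by field_simp
    _ ≤ y ^ δ / δ * (exp 1 * y ^ δ)⁻¹ := by gcongr
    _ = (δ * exp 1)⁻¹ := by field_simp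

lemma rpow_mul_one_sub_log_le {s p q δ : ℝ} (hs₀ : 0 < s) (hs₁ : s ≤ 1) (hδ : 0 < δ)
    (hpq : p + δ ≤ q) : s ^ q * (1 - log s) ≤ (1 + (δ * exp 1)⁻¹) * s ^ p := by
  have hsplit : s ^ q = s ^ p * s ^ (q - p) := by rw [← rpow_add hs₀]; ring_nf
  have hle_one : s ^ (q - p) ≤ 1 := rpow_le_one hs₀.le hs₁ (by linarith)
  have hlog : s ^ (q - p) * -log s ≤ (δ * exp 1)⁻¹ :=
    calc s ^ (q - p) * -log s ≤ s ^ δ * -log s :=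
          mul_le_mul_of_nonneg_right (rpow_le_rpow_of_exponent_ge hs₀ hs₁ (by linarith))
            (by linarith [log_nonpos hs₀.le hs₁])
      _ ≤ _ := rpow_mul_neg_log_le hs₀ hδ
  calc s ^ q * (1 - log s) = s ^ p * (s ^ (q - p) + s ^ (q - p) * -log s) := by
        rw [hsplit]; ring
    _ ≤ s ^ p * (1 + (δ * exp 1)⁻¹) := by gcongr
    _ = _ := mul_comm _ _

lemma mul_cos_le_sin {x : ℝ} (h₀ : 0 ≤ x) (h₁ : x < π / 2) : x * cos x ≤ sin x := by
  have hcos : 0 < cos x := cos_pos_of_mem_Ioo ⟨by linarith [pi_pos], h₁⟩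
  calc x * cos x ≤ tan x * cos x := by gcongr; exact le_tan h₀ h₁
    _ = sin x := by rw [tan_eq_sin_div_cos, div_mul_cancel₀ _ hcos.ne']

lemma hasDerivAt_sin_div_rpow {a t : ℝ} (hs : 0 < sin (a / t)) :
    HasDerivAt (fun τ => sin (a / τ) ^ (τ / 3))
      ((sin (a / t) ^ (t / 3) * log (sin (a / t))
        - a / t * cos (a / t) * sin (a / t) ^ (t / 3 - 1)) / 3) t := by
  have ht : t ≠ 0 := by rintro rfl; simp at hs
  have hinner : HasDerivAt (fun τ => a / τ) (-(a / t ^ 2)) t := by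
    simpa [div_eq_mul_inv] using (hasDerivAt_inv ht).const_mul a
  convert hinner.sin.rpow ((hasDerivAt_id' t).div_const 3) hs using 1
  field_simp
  ring

lemma hasDerivAt_sin_mul_rpow {k q x : ℝ} (hx : sin (k * x) ≠ 0) :
    HasDerivAt (fun y => sin (k * y) ^ q) (q * k * cos (k * x) * sin (k * x) ^ (q - 1)) x := by
  convert (((hasDerivAt_id' x).const_mul k).sin).rpow_const (p := q) (Or.inl hx) using 1
  ring

lemma deriv_deriv_sin_mul_rpow {k q x : ℝ} (hx : sin (k * x) ≠ 0) :
    deriv (deriv fun y => sin (k * y) ^ q) x =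
      q * k ^ 2 * ((q - 1) * sin (k * x) ^ (q - 2) - q * sin (k * x) ^ q) := by
  have hderiv : deriv (fun y => sin (k * y) ^ q)
      =ᶠ[𝓝 x] fun y => q * k * cos (k * y) * sin (k * y) ^ (q - 1) := by
    have hcont : ContinuousAt (fun y => sin (k * y)) x := by fun_prop
    filter_upwards [hcont.eventually_ne hx] with y hy
    exact (hasDerivAt_sin_mul_rpow hy).deriv
  rw [hderiv.deriv_eq]
  have hcos := (((hasDerivAt_id' x).const_mul k).cos).const_mul (q * k)
  have hprod : HasDerivAt (fun y => q * k * cos (k * y) * sin (k * y) ^ (q - 1)) _ x :=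
    hcos.mul (hasDerivAt_sin_mul_rpow (q := q - 1) hx)
  rw [hprod.deriv]
  have h₁ : sin (k * x) ^ (q - 1) = sin (k * x) ^ (q - 2) * sin (k * x) := by
    rw [← rpow_add_one hx]; ring_nf
  have h₂ : sin (k * x) ^ q = sin (k * x) ^ (q - 2) * sin (k * x) * sin (k * x) := by
    rw [← rpow_add_one hx, ← rpow_add_one hx]; ring_nf
  have h₃ : sin (k * x) ^ (q - 1 - 1) = sin (k * x) ^ (q - 2) := by ring_nf
  rw [h₁, h₂, h₃]
  linear_combination (q * k ^ 2 * (q - 1) * sin (k * x) ^ (q - 2)) * cos_sq_add_sin_sq (k * x)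

lemma deriv_deriv_sin_rpow_add_self {t x : ℝ} (hx : sin (3 * x / t) ≠ 0) :
    deriv (deriv fun y => sin (3 * y / t) ^ (t / 3)) x + sin (3 * x / t) ^ (t / 3) =
      (1 - 3 / t) * sin (3 * x / t) ^ (t / 3 - 2) := by
  have ht : t ≠ 0 := by rintro rfl; simp at hx
  simp only [mul_div_right_comm (3 : ℝ)] at hx ⊢
  rw [deriv_deriv_sin_mul_rpow hx]
  field_simp
  ring

lemma exists_forall_add_mul_le_mul_rpow_mul {c r : ℝ} (hc : 0 < c) (hr : 1 ≤ r) (M : ℝ) :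
    ∃ A₀ > 0, ∀ A ≥ A₀, 1 + M * A ≤ c * A ^ r * A := by
  refine ⟨max 1 ((M + 1) / c), by positivity, fun A hA => ?_⟩
  have hA₁ : 1 ≤ A := (le_max_left _ _).trans hA
  have hcA : M + 1 ≤ c * A := by
    rw [← div_le_iff₀' hc]; exact (le_max_right _ _).trans hA
  have hAr : A ≤ A ^ r := by simpa using rpow_le_rpow_of_exponent_le hA₁ hr
  calc 1 + M * A ≤ (M + 1) * A := by nlinarith
    _ ≤ c * A * A := by gcongr
    _ ≤ c * A ^ r * A := by gcongr

lemma three_mul_div_mem_Ioo {θ t : ℝ} (hθ : 0 < θ) (hθt : θ < t * π / 6) :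
    3 * θ / t ∈ Set.Ioo 0 (π / 2) := by
  have ht : 0 < t := by nlinarith [pi_pos]
  exact ⟨by positivity, by rw [div_lt_iff₀ ht]; linarith⟩

lemma sin_three_mul_div_pos {θ t : ℝ} (hθ : 0 < θ) (hθt : θ < t * π / 6) :
    0 < sin (3 * θ / t) :=
  have hb := three_mul_div_mem_Ioo hθ hθt
  sin_pos_of_pos_of_lt_pi hb.1 (by linarith [hb.2, pi_pos])

lemma sin_rpow_supersolution_bound {α A θ t δ : ℝ} (hα : α ≠ 0) (hA : 0 ≤ A) (hθ : 0 < θ)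
    (hθt : θ < t * π / 6) (hδ : 0 < δ) (htδ : t * (1 + 1 / α) / 3 + δ ≤ 2) :
    (α * (3 / t - 1) * A ^ (1 + 1 / α) * A - (1 + (δ * exp 1)⁻¹) / 3 * A)
        * sin (3 * θ / t) ^ ((2 * α + 1) / (3 * α) * t - 2) ≤
      deriv (fun τ => A * sin (3 * θ / τ) ^ (τ / 3)) t
        - α * (A * sin (3 * θ / t) ^ (t / 3)) ^ (1 + 1 / α) *
          (deriv (deriv (fun x => A * sin (3 * x / t) ^ (t / 3))) θ
            + A * sin (3 * θ / t) ^ (t / 3)) := by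
  set b := 3 * θ / t
  set p := (2 * α + 1) / (3 * α) * t - 2 with hp
  have hp' : p = t / 3 + t * (1 + 1 / α) / 3 - 2 := by rw [hp]; field_simp; ring
  obtain ⟨hb₀, hb₁⟩ := three_mul_div_mem_Ioo hθ hθt
  have hs₀ : 0 < sin b := sin_three_mul_div_pos hθ hθt
  have hwt : deriv (fun τ => A * sin (3 * θ / τ) ^ (τ / 3)) t =
      A * ((sin b ^ (t / 3) * log (sin b) - b * cos b * sin b ^ (t / 3 - 1)) / 3) :=
    ((hasDerivAt_sin_div_rpow hs₀).const_mul A).deriv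
  have hwθθ : deriv (deriv (fun x => A * sin (3 * x / t) ^ (t / 3))) θ + A * sin b ^ (t / 3) =
      A * ((1 - 3 / t) * sin b ^ (t / 3 - 2)) := by
    simp only [deriv_const_mul_field']
    rw [← mul_add, deriv_deriv_sin_rpow_add_self hs₀.ne']
  have hpow : (A * sin b ^ (t / 3)) ^ (1 + 1 / α) * sin b ^ (t / 3 - 2) =
      A ^ (1 + 1 / α) * sin b ^ p := by
    rw [mul_rpow hA (rpow_nonneg hs₀.le _), ← rpow_mul hs₀.le, mul_assoc, ← rpow_add hs₀]
    congr 2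
    rw [hp']
    ring
  have hcos : b * cos b * sin b ^ (t / 3 - 1) ≤ sin b ^ (t / 3) := by
    calc b * cos b * sin b ^ (t / 3 - 1) ≤ sin b * sin b ^ (t / 3 - 1) := by
          gcongr; exact mul_cos_le_sin hb₀.le hb₁
      _ = sin b ^ (t / 3) := by rw [mul_comm, ← rpow_add_one hs₀.ne']; ring_nf
  have hlog := rpow_mul_one_sub_log_le hs₀ (sin_le_one b) hδ (p := p) (q := t / 3) (by linarith)
  rw [hwt, hwθθ]
  have hflow : α * (A * sin b ^ (t / 3)) ^ (1 + 1 / α) * (A * ((1 - 3 / t) * sin b ^ (t / 3 - 2))) =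
      -(α * (3 / t - 1) * A ^ (1 + 1 / α) * A * sin b ^ p) := by
    linear_combination α * (1 - 3 / t) * A * hpow
  linarith [mul_le_mul_of_nonneg_left hcos hA, mul_le_mul_of_nonneg_left hlog hA]

theorem stmt8 (α t₀ : ℝ) (hα : 0 < α) (ht₀ : 0 < t₀)
    (ht₀' : t₀ < min 3 (6 / (1 + 1/α))) :
    ∃ A₀ : ℝ, 0 < A₀ ∧ ∃ ε₀ : ℝ, 0 < ε₀ ∧ ∀ A : ℝ, A₀ ≤ A → ∀ θ t : ℝ,
      0 < θ → θ < t * Real.pi / 6 → 0 < t → t < t₀ →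
      (ε₀ * Real.sin (3*θ/t) ^ ((2*α+1)/(3*α) * t - 2) ≤
        deriv (fun τ => A * Real.sin (3*θ/τ) ^ (τ/3)) t
          - α * (A * Real.sin (3*θ/t) ^ (t/3)) ^ (1 + 1/α) *
            (deriv (deriv (fun x => A * Real.sin (3*x/t) ^ (t/3))) θ
              + A * Real.sin (3*θ/t) ^ (t/3))) ∧
      0 ≤ ε₀ * Real.sin (3*θ/t) ^ ((2*α+1)/(3*α) * t - 2) := by
  have hr : 0 < 1 + 1 / α := by positivity
  have ht₀3 : t₀ < 3 := ht₀'.trans_le (min_le_left _ _)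
  have ht₀6 : t₀ * (1 + 1 / α) < 6 := (lt_div_iff₀ hr).1 (ht₀'.trans_le (min_le_right _ _))
  obtain ⟨δ, hδ, hδt₀⟩ : ∃ δ > 0, t₀ * (1 + 1 / α) / 3 + δ = 2 := ⟨_, by linarith, add_sub_cancel _ 2⟩
  have hc : 0 < α * (3 / t₀ - 1) := mul_pos hα (by linarith [(one_lt_div ht₀).2 ht₀3])
  obtain ⟨A₀, hA₀, hlarge⟩ := exists_forall_add_mul_le_mul_rpow_mul hc
    (r := 1 + 1 / α) (by linarith [one_div_pos.2 hα]) ((1 + (δ * exp 1)⁻¹) / 3)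
  refine ⟨A₀, hA₀, 1, one_pos, fun A hA θ t hθ hθt _ htt₀ => ?_⟩
  have hs := sin_three_mul_div_pos hθ hθt
  refine ⟨le_trans ?_ (sin_rpow_supersolution_bound hα.ne' (hA₀.le.trans hA) hθ hθt hδ ?_),
    by positivity⟩
  · have hct : α * (3 / t₀ - 1) ≤ α * (3 / t - 1) := by gcongr
    have hApos : 0 < A ^ (1 + 1 / α) * A := by have := hA₀.trans_le hA; positivity
    gcongr
    linarith [hlarge A hA, mul_le_mul_of_nonneg_right hct hApos.le]
  · linarith [mul_lt_mul_of_pos_right htt₀ hr]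
end

section
/- Let p : [δ, π−δ] × [t₁, t₂] → (0, ∞) be smooth and satisfy p_t = α p p_{θθ} − (α/(α+1)) p_θ² + (α+1) p², with α > 0. Define J^δ(t) = ∫_δ^{π−δ} (p_θ²/p^{2/(α+1)} − ((α+1)/α)² p^{2α/(α+1)}) dθ. Then, writing u = p^{α/(α+1)}, d/dt J^δ(t) = (2(α+1)²/α²)( −α ∫_δ^{π−δ} u^{(α+1)/α} (u_{θθ} + u)² dθ + [u_θ u_t]_{θ=δ}^{θ=π−δ} ). -/
open Real Set intervalIntegral

private lemma rpow_two' (q : ℝ) : q ^ (2:ℝ) = q^2 := by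
  rw [show (2:ℝ) = ((2:ℕ):ℝ) by norm_num, Real.rpow_natCast]

private lemma algA (α q a b d : ℝ) (hα : 0 < α) (hq : 0 < q) :
    2*((α+1)/α)^2 * ((a * (α/(α+1)) * q ^ (α/(α+1)-1)) *
        ((α/(α+1))*((α/(α+1))-1)*q^((α/(α+1))-2)*a*b + (α/(α+1))*q^((α/(α+1))-1)*d)
      - q ^ (α/(α+1)) * (b * (α/(α+1)) * q ^ ((α/(α+1))-1)))
    = (((2:ℕ):ℝ) * a ^ (2-1) * d * q ^ ((2:ℝ)/(α+1))
        - a ^ 2 * (b * ((2:ℝ)/(α+1)) * q ^ ((2:ℝ)/(α+1) - 1))) / (q ^ ((2:ℝ)/(α+1))) ^ 2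
      - ((α+1)/α) ^ 2 * (b * (2*α/(α+1)) * q ^ (2*α/(α+1) - 1)) := by
  have hα1 : (0:ℝ) < α + 1 := by linarith
  set γ : ℝ := α/(α+1) with hγ
  have hXpos : 0 < q ^ γ := Real.rpow_pos_of_pos hq _
  have h2γ : q ^ (2*γ) = (q^γ)^2 := by
    rw [two_mul, Real.rpow_add hq, sq]
  have hq1 : q ^ (γ-1) = q^γ/q := by rw [Real.rpow_sub hq, Real.rpow_one]
  have hq2 : q ^ (γ-2) = q^γ/q^2 := by rw [Real.rpow_sub hq, rpow_two']
  have he1 : (2:ℝ)/(α+1) = 2 - 2*γ := by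
    rw [hγ]; field_simp; ring
  have hq3 : q ^ ((2:ℝ)/(α+1)) = q^2/(q^γ)^2 := by
    rw [he1, Real.rpow_sub hq, rpow_two', h2γ]
  have hq4 : q ^ ((2:ℝ)/(α+1) - 1) = q^2/(q^γ)^2/q := by
    rw [Real.rpow_sub hq, hq3, Real.rpow_one]
  have he2 : 2*α/(α+1) = 2*γ := by rw [hγ]; ring
  have hq5 : q ^ (2*α/(α+1) - 1) = (q^γ)^2/q := by
    rw [Real.rpow_sub hq, he2, h2γ, Real.rpow_one]
  rw [hq3, hq4, hq5, hq1, hq2]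
  generalize q ^ γ = X at hXpos ⊢
  have h1 : q ≠ 0 := hq.ne'
  have h2 : X ≠ 0 := hXpos.ne'
  have h3 : α ≠ 0 := hα.ne'
  have h4 : α + 1 ≠ 0 := hα1.ne'
  rw [hγ]
  field_simp
  ring

private lemma algB (α q a b c : ℝ) (hα : 0 < α) (hq : 0 < q)
    (hb : b = α * q * c - (α/(α+1)) * a^2 + (α+1) * q^2) :
    ((α/(α+1))*((α/(α+1))-1)*q^((α/(α+1))-2)*a^2 + (α/(α+1))*q^((α/(α+1))-1)*c + q^(α/(α+1)))
        * (b * (α/(α+1)) * q ^ ((α/(α+1))-1))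
    = α * q * ((α/(α+1))*((α/(α+1))-1)*q^((α/(α+1))-2)*a^2
        + (α/(α+1))*q^((α/(α+1))-1)*c + q^(α/(α+1)))^2 := by
  have hα1 : (0:ℝ) < α + 1 := by linarith
  set γ : ℝ := α/(α+1) with hγ
  have hXpos : 0 < q ^ γ := Real.rpow_pos_of_pos hq _
  have hq1 : q ^ (γ-1) = q^γ/q := by rw [Real.rpow_sub hq, Real.rpow_one]
  have hq2 : q ^ (γ-2) = q^γ/q^2 := by rw [Real.rpow_sub hq, rpow_two']
  have key : b * γ * q ^ (γ-1)
      = α * q * (γ*(γ-1)*q^(γ-2)*a^2 + γ*q^(γ-1)*c + q^γ) := by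
    rw [hb, hq1, hq2]
    generalize q ^ γ = X at hXpos ⊢
    have h1 : q ≠ 0 := hq.ne'
    have h3 : α ≠ 0 := hα.ne'
    have h4 : α + 1 ≠ 0 := hα1.ne'
    rw [hγ]
    field_simp
    ring
  calc (γ*(γ-1)*q^(γ-2)*a^2 + γ*q^(γ-1)*c + q^γ) * (b * γ * q ^ (γ-1))
      = (γ*(γ-1)*q^(γ-2)*a^2 + γ*q^(γ-1)*c + q^γ)
          * (α * q * (γ*(γ-1)*q^(γ-2)*a^2 + γ*q^(γ-1)*c + q^γ)) := by rw [key]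
    _ = α * q * (γ*(γ-1)*q^(γ-2)*a^2 + γ*q^(γ-1)*c + q^γ)^2 := by ring

theorem stmt14 (α δ t₁ t₂ : ℝ) (p : ℝ → ℝ → ℝ)
    (hα : 0 < α) (hδ : 0 < δ) (hδ' : δ < Real.pi/2) (ht : t₁ < t₂)
    (hsmooth : ContDiff ℝ (⊤ : ℕ∞) (Function.uncurry p))
    (hpos : ∀ θ ∈ Set.Icc δ (Real.pi - δ), ∀ t ∈ Set.Icc t₁ t₂, 0 < p θ t)
    (hpde : ∀ θ ∈ Set.Icc δ (Real.pi - δ), ∀ t ∈ Set.Icc t₁ t₂,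
      deriv (fun τ => p θ τ) t =
        α * p θ t * deriv (deriv (fun x => p x t)) θ
          - (α/(α+1)) * (deriv (fun x => p x t) θ)^2 + (α+1) * (p θ t)^2) :
    ∀ t ∈ Set.Icc t₁ t₂,
      HasDerivAt (fun τ => ∫ θ in δ..(Real.pi - δ),
          ((deriv (fun x => p x τ) θ)^2 / (p θ τ) ^ ((2:ℝ)/(α+1))
            - ((α+1)/α)^2 * (p θ τ) ^ (2*α/(α+1))))
        (2*(α+1)^2/α^2 *
          (-α * (∫ θ in δ..(Real.pi - δ),
              (p θ t ^ (α/(α+1))) ^ ((α+1)/α) *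
                (deriv (deriv (fun x => p x t ^ (α/(α+1)))) θ + p θ t ^ (α/(α+1)))^2)
            + (deriv (fun x => p x t ^ (α/(α+1))) (Real.pi - δ) *
                 deriv (fun τ => p (Real.pi - δ) τ ^ (α/(α+1))) t
               - deriv (fun x => p x t ^ (α/(α+1))) δ *
                 deriv (fun τ => p δ τ ^ (α/(α+1))) t))) t := by
  intro t htt
  have hα1 : (0:ℝ) < α + 1 := by linarith
  have hδπ : δ < Real.pi - δ := by linarith
  have hδπ' : δ ≤ Real.pi - δ := hδπ.le
  -- basic calculus infrastructure
  have hpcont : Continuous (Function.uncurry p) := hsmooth.continuous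
  have hdf : Differentiable ℝ (Function.uncurry p) := hsmooth.differentiable (by simp)
  have hf' : ∀ z, HasFDerivAt (Function.uncurry p) (fderiv ℝ (Function.uncurry p) z) z :=
    fun z => (hdf z).hasFDerivAt
  have hcf' : ContDiff ℝ (⊤ : ℕ∞) (fderiv ℝ (Function.uncurry p)) := hsmooth.fderiv_right (by simp)
  have hdf' : Differentiable ℝ (fderiv ℝ (Function.uncurry p)) := hcf'.differentiable (by simp)
  have hf'' : ∀ z, HasFDerivAt (fderiv ℝ (Function.uncurry p))
      (fderiv ℝ (fderiv ℝ (Function.uncurry p)) z) z := fun z => (hdf' z).hasFDerivAt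
  set A : ℝ → ℝ → ℝ := fun θ τ => fderiv ℝ (Function.uncurry p) (θ, τ) (1, 0) with hA_def
  set B : ℝ → ℝ → ℝ := fun θ τ => fderiv ℝ (Function.uncurry p) (θ, τ) (0, 1) with hB_def
  set C : ℝ → ℝ → ℝ :=
    fun θ τ => fderiv ℝ (fderiv ℝ (Function.uncurry p)) (θ, τ) (1, 0) (1, 0) with hC_def
  set D : ℝ → ℝ → ℝ :=
    fun θ τ => fderiv ℝ (fderiv ℝ (Function.uncurry p)) (θ, τ) (0, 1) (1, 0) with hD_def
  have hA : ∀ θ τ, HasDerivAt (fun x => p x τ) (A θ τ) θ := by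
    intro θ τ
    have h := (hf' (θ, τ)).comp_hasDerivAt θ ((hasDerivAt_id θ).prodMk (hasDerivAt_const θ τ))
    simpa [Function.comp_def] using h
  have hB' : ∀ θ τ, HasDerivAt (fun τ' => p θ τ') (B θ τ) τ := by
    intro θ τ
    have h := (hf' (θ, τ)).comp_hasDerivAt τ ((hasDerivAt_const τ θ).prodMk (hasDerivAt_id τ))
    simpa [Function.comp_def] using h
  have hAx : ∀ θ τ, HasDerivAt (fun x => A x τ) (C θ τ) θ := by
    intro θ τ
    have h1 : HasDerivAt (fun x => fderiv ℝ (Function.uncurry p) (x, τ))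
        (fderiv ℝ (fderiv ℝ (Function.uncurry p)) (θ, τ) (1, 0)) θ := by
      have h := (hf'' (θ, τ)).comp_hasDerivAt θ ((hasDerivAt_id θ).prodMk (hasDerivAt_const θ τ))
      simpa [Function.comp_def] using h
    have h2 := h1.clm_apply (hasDerivAt_const θ ((1:ℝ), (0:ℝ)))
    simpa using h2
  have hAτ : ∀ θ τ, HasDerivAt (fun τ' => A θ τ') (D θ τ) τ := by
    intro θ τ
    have h1 : HasDerivAt (fun τ' => fderiv ℝ (Function.uncurry p) (θ, τ'))
        (fderiv ℝ (fderiv ℝ (Function.uncurry p)) (θ, τ) (0, 1)) τ := by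
      have h := (hf'' (θ, τ)).comp_hasDerivAt τ ((hasDerivAt_const τ θ).prodMk (hasDerivAt_id τ))
      simpa [Function.comp_def] using h
    have h2 := h1.clm_apply (hasDerivAt_const τ ((1:ℝ), (0:ℝ)))
    simpa using h2
  have hsymm : ∀ θ τ, fderiv ℝ (fderiv ℝ (Function.uncurry p)) (θ, τ) (1, 0) (0, 1) = D θ τ := by
    intro θ τ
    exact second_derivative_symmetric hf' (hf'' (θ, τ)) _ _
  have hBx : ∀ θ τ, HasDerivAt (fun x => B x τ) (D θ τ) θ := by
    intro θ τ
    have h1 : HasDerivAt (fun x => fderiv ℝ (Function.uncurry p) (x, τ))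
        (fderiv ℝ (fderiv ℝ (Function.uncurry p)) (θ, τ) (1, 0)) θ := by
      have h := (hf'' (θ, τ)).comp_hasDerivAt θ ((hasDerivAt_id θ).prodMk (hasDerivAt_const θ τ))
      simpa [Function.comp_def] using h
    have h2 := h1.clm_apply (hasDerivAt_const θ ((0:ℝ), (1:ℝ)))
    simpa [hsymm θ τ] using h2
  have contA : Continuous (Function.uncurry A) := (hcf'.continuous).clm_apply continuous_const
  have contB : Continuous (Function.uncurry B) := (hcf'.continuous).clm_apply continuous_const
  have hcf'' : ContDiff ℝ (⊤ : ℕ∞) (fderiv ℝ (fderiv ℝ (Function.uncurry p))) := hcf'.fderiv_right (by simp)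
  have contD : Continuous (Function.uncurry D) :=
    ((hcf''.continuous).clm_apply continuous_const).clm_apply continuous_const
  -- positivity on a neighborhood in time
  have hUopen : IsOpen {z : ℝ × ℝ | 0 < Function.uncurry p z} :=
    isOpen_lt continuous_const hpcont
  have hKU : (Icc δ (Real.pi - δ) ×ˢ Icc t₁ t₂) ⊆ {z : ℝ × ℝ | 0 < Function.uncurry p z} :=
    fun z hz => hpos z.1 hz.1 z.2 hz.2
  obtain ⟨ε, hε, hthick⟩ :=
    (isCompact_Icc.prod isCompact_Icc).exists_thickening_subset_open hUopen hKU
  have hq : ∀ θ ∈ Icc δ (Real.pi - δ), ∀ τ ∈ Icc (t - ε/2) (t + ε/2), 0 < p θ τ := by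
    intro θ hθ τ hτ
    have hd : dist τ t ≤ ε/2 := by
      rw [Real.dist_eq, abs_le]; exact ⟨by linarith [hτ.1], by linarith [hτ.2]⟩
    have hmem : (θ, τ) ∈ Metric.thickening ε (Icc δ (Real.pi - δ) ×ˢ Icc t₁ t₂) := by
      rw [Metric.mem_thickening_iff]
      refine ⟨(θ, t), ⟨hθ, htt⟩, ?_⟩
      rw [Prod.dist_eq]
      have : max (dist θ θ) (dist τ t) ≤ ε/2 := by
        rw [dist_self]; exact max_le (by linarith) hd
      calc max (dist θ θ) (dist τ t) ≤ ε/2 := this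
        _ < ε := by linarith
    exact hthick hmem
  have htmem : t ∈ Icc (t - ε/2) (t + ε/2) := ⟨by linarith, by linarith⟩
  have hqt : ∀ x ∈ Icc δ (Real.pi - δ), 0 < p x t := fun x hx => hq x hx t htmem
  -- the time derivative of the integrand
  set F' : ℝ → ℝ → ℝ := fun θ τ =>
    2*((α+1)/α)^2 * ((A θ τ * (α/(α+1)) * p θ τ ^ (α/(α+1)-1)) *
        ((α/(α+1))*((α/(α+1))-1)*p θ τ^((α/(α+1))-2)*A θ τ*B θ τ
          + (α/(α+1))*p θ τ^((α/(α+1))-1)*D θ τ)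
      - p θ τ ^ (α/(α+1)) * (B θ τ * (α/(α+1)) * p θ τ ^ ((α/(α+1))-1))) with hF'_def
  have hFderiv : ∀ θ τ, 0 < p θ τ → HasDerivAt
      (fun τ' => (A θ τ')^2 / p θ τ' ^ ((2:ℝ)/(α+1)) - ((α+1)/α)^2 * p θ τ' ^ (2*α/(α+1)))
      (F' θ τ) τ := by
    intro θ τ hq0
    have hne : p θ τ ^ ((2:ℝ)/(α+1)) ≠ 0 := (Real.rpow_pos_of_pos hq0 _).ne'
    have h2 := (hAτ θ τ).pow 2
    have h3 := (hB' θ τ).rpow_const (p := (2:ℝ)/(α+1)) (Or.inl hq0.ne')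
    have h5 := ((hB' θ τ).rpow_const (p := 2*α/(α+1)) (Or.inl hq0.ne')).const_mul (((α+1)/α)^2)
    have h6 := (h2.div h3 hne).sub h5
    have halg := algA α (p θ τ) (A θ τ) (B θ τ) (D θ τ) hα hq0
    exact h6.congr_deriv halg.symm
  -- continuity of F' on the positivity set
  have cA : Continuous (fun z : ℝ × ℝ => A z.1 z.2) := by
    have : (fun z : ℝ × ℝ => A z.1 z.2) = Function.uncurry A := rfl
    rw [this]; exact contA
  have cB : Continuous (fun z : ℝ × ℝ => B z.1 z.2) := by
    have : (fun z : ℝ × ℝ => B z.1 z.2) = Function.uncurry B := rfl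
    rw [this]; exact contB
  have cD : Continuous (fun z : ℝ × ℝ => D z.1 z.2) := by
    have : (fun z : ℝ × ℝ => D z.1 z.2) = Function.uncurry D := rfl
    rw [this]; exact contD
  have cP : Continuous (fun z : ℝ × ℝ => p z.1 z.2) := by
    have : (fun z : ℝ × ℝ => p z.1 z.2) = Function.uncurry p := rfl
    rw [this]; exact hpcont
  have hrp : ∀ (e : ℝ), ContinuousOn (fun z : ℝ × ℝ => p z.1 z.2 ^ e)
      {z : ℝ × ℝ | 0 < Function.uncurry p z} :=
    fun e => ContinuousOn.rpow_const cP.continuousOn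
      (fun z hz => Or.inl (ne_of_gt (hz : 0 < p z.1 z.2)))
  have hcontF' : ContinuousOn (fun z : ℝ × ℝ => F' z.1 z.2)
      {z : ℝ × ℝ | 0 < Function.uncurry p z} := by
    apply ContinuousOn.mul continuousOn_const
    apply ContinuousOn.sub
    · exact (((cA.continuousOn.mul continuousOn_const).mul (hrp _)).mul
        (((((continuousOn_const.mul continuousOn_const).mul (hrp _)).mul
          cA.continuousOn).mul cB.continuousOn).add
          ((continuousOn_const.mul (hrp _)).mul cD.continuousOn)))
    · exact (hrp _).mul ((cB.continuousOn.mul continuousOn_const).mul (hrp _))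
  have hK'sub : Icc δ (Real.pi - δ) ×ˢ Icc (t - ε/2) (t + ε/2)
      ⊆ {z : ℝ × ℝ | 0 < Function.uncurry p z} := fun z hz => hq z.1 hz.1 z.2 hz.2
  obtain ⟨M, hM⟩ := (isCompact_Icc.prod isCompact_Icc).exists_bound_of_continuousOn
    (hcontF'.mono hK'sub)
  -- continuity of the integrand in θ at fixed time
  have hcontFint : ∀ τ ∈ Icc (t - ε/2) (t + ε/2),
      ContinuousOn (fun θ => (A θ τ)^2 / p θ τ ^ ((2:ℝ)/(α+1))
        - ((α+1)/α)^2 * p θ τ ^ (2*α/(α+1))) (Icc δ (Real.pi - δ)) := by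
    intro τ hτ
    have cA1 : Continuous (fun θ => A θ τ) := cA.comp (continuous_id.prodMk continuous_const)
    have cP1 : Continuous (fun θ => p θ τ) := cP.comp (continuous_id.prodMk continuous_const)
    have hrp1 : ∀ (e : ℝ), ContinuousOn (fun θ => p θ τ ^ e) (Icc δ (Real.pi - δ)) :=
      fun e => ContinuousOn.rpow_const cP1.continuousOn
        (fun θ hθ => Or.inl (hq θ hθ τ hτ).ne')
    apply ContinuousOn.sub
    · exact ContinuousOn.div (cA1.pow 2).continuousOn (hrp1 _)
        (fun θ hθ => (Real.rpow_pos_of_pos (hq θ hθ τ hτ) _).ne')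
    · exact continuousOn_const.mul (hrp1 _)
  -- differentiation under the integral sign
  have hmain := intervalIntegral.hasDerivAt_integral_of_dominated_loc_of_deriv_le
    (F := fun τ θ => (A θ τ)^2 / p θ τ ^ ((2:ℝ)/(α+1)) - ((α+1)/α)^2 * p θ τ ^ (2*α/(α+1)))
    (F' := fun τ θ => F' θ τ) (x₀ := t) (a := δ) (b := Real.pi - δ)
    (bound := fun _ => M) (μ := MeasureTheory.volume) (s := Metric.ball t (ε/2)) (Metric.ball_mem_nhds t (by linarith))
    ?_ ?_ ?_ ?_ ?_ ?_
  rotate_left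
  · -- measurability of F near t
    filter_upwards [Metric.ball_mem_nhds t (by linarith : (0:ℝ) < ε/2)] with τ hτ
    have hτ' : τ ∈ Icc (t - ε/2) (t + ε/2) := by
      have := Metric.mem_ball.mp hτ
      rw [Real.dist_eq, abs_lt] at this
      exact ⟨by linarith [this.1], by linarith [this.2]⟩
    refine ContinuousOn.aestronglyMeasurable ?_ measurableSet_uIoc
    refine (hcontFint τ hτ').mono ?_
    rw [uIoc_of_le hδπ']
    exact Ioc_subset_Icc_self
  · -- integrability of F t
    refine ContinuousOn.intervalIntegrable ?_
    rw [uIcc_of_le hδπ']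
    exact hcontFint t htmem
  · -- measurability of F' t
    refine ContinuousOn.aestronglyMeasurable ?_ measurableSet_uIoc
    have : ContinuousOn (fun θ => F' θ t) (Icc δ (Real.pi - δ)) := by
      have := hcontF'.mono hK'sub
      have h2 := this.comp (Continuous.continuousOn (continuous_id.prodMk continuous_const))
        (fun θ (hθ : θ ∈ Icc δ (Real.pi - δ)) => Set.mk_mem_prod hθ htmem)
      exact h2
    refine this.mono ?_
    rw [uIoc_of_le hδπ']
    exact Ioc_subset_Icc_self
  · -- bound
    refine MeasureTheory.ae_of_all _ (fun θ hθ x hx => ?_)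
    have hθ' : θ ∈ Icc δ (Real.pi - δ) := by
      rw [uIoc_of_le hδπ'] at hθ; exact Ioc_subset_Icc_self hθ
    have hx' : x ∈ Icc (t - ε/2) (t + ε/2) := by
      have := Metric.mem_ball.mp hx
      rw [Real.dist_eq, abs_lt] at this
      exact ⟨by linarith [this.1], by linarith [this.2]⟩
    exact hM (θ, x) (Set.mk_mem_prod hθ' hx')
  · exact intervalIntegrable_const
  · -- differentiability
    refine MeasureTheory.ae_of_all _ (fun θ hθ x hx => ?_)
    have hθ' : θ ∈ Icc δ (Real.pi - δ) := by
      rw [uIoc_of_le hδπ'] at hθ; exact Ioc_subset_Icc_self hθ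
    have hx' : x ∈ Icc (t - ε/2) (t + ε/2) := by
      have := Metric.mem_ball.mp hx
      rw [Real.dist_eq, abs_lt] at this
      exact ⟨by linarith [this.1], by linarith [this.2]⟩
    exact hFderiv θ x (hq θ hθ' x hx')
  obtain ⟨-, hDer⟩ := hmain
  -- rewrite the goal's function via A
  have hderiv1 : ∀ θ τ, deriv (fun x => p x τ) θ = A θ τ := fun θ τ => (hA θ τ).deriv
  simp only [hderiv1]
  -- now identify the derivative value
  refine hDer.congr_deriv ?_
  symm
  beta_reduce
  -- pointwise derivative facts at time t
  have hw1 : ∀ x ∈ Icc δ (Real.pi - δ),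
      HasDerivAt (fun y => A y t * (α/(α+1)) * p y t ^ (α/(α+1)-1))
        ((α/(α+1))*((α/(α+1))-1)*p x t^((α/(α+1))-2)*(A x t)^2
          + (α/(α+1))*p x t^((α/(α+1))-1)*C x t) x := by
    intro x hx
    have h1 := ((hAx x t).mul_const (α/(α+1))).mul
      ((hA x t).rpow_const (p := α/(α+1)-1) (Or.inl (hqt x hx).ne'))
    refine h1.congr_deriv ?_
    beta_reduce
    ring
  have hw2 : ∀ x ∈ Icc δ (Real.pi - δ),
      HasDerivAt (fun y => B y t * (α/(α+1)) * p y t ^ ((α/(α+1))-1))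
        ((α/(α+1))*((α/(α+1))-1)*p x t^((α/(α+1))-2)*A x t*B x t
          + (α/(α+1))*p x t^((α/(α+1))-1)*D x t) x := by
    intro x hx
    have h1 := ((hBx x t).mul_const (α/(α+1))).mul
      ((hA x t).rpow_const (p := α/(α+1)-1) (Or.inl (hqt x hx).ne'))
    refine h1.congr_deriv ?_
    beta_reduce
    ring

  -- C continuity
  have contC : Continuous (Function.uncurry C) :=
    ((hcf''.continuous).clm_apply continuous_const).clm_apply continuous_const
  have cC : Continuous (fun z : ℝ × ℝ => C z.1 z.2) := by
    have : (fun z : ℝ × ℝ => C z.1 z.2) = Function.uncurry C := rfl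
    rw [this]; exact contC
  -- slice continuity at time t
  have cA1t : Continuous (fun x => A x t) := cA.comp (continuous_id.prodMk continuous_const)
  have cB1t : Continuous (fun x => B x t) := cB.comp (continuous_id.prodMk continuous_const)
  have cC1t : Continuous (fun x => C x t) := cC.comp (continuous_id.prodMk continuous_const)
  have cD1t : Continuous (fun x => D x t) := cD.comp (continuous_id.prodMk continuous_const)
  have cP1t : Continuous (fun x => p x t) := cP.comp (continuous_id.prodMk continuous_const)
  have hrpt : ∀ (e : ℝ), ContinuousOn (fun x => p x t ^ e) (Icc δ (Real.pi - δ)) :=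
    fun e => ContinuousOn.rpow_const cP1t.continuousOn
      (fun x hx => Or.inl (hqt x hx).ne')
  -- PDE at time t in terms of A B C
  have hPDEx : ∀ x ∈ Icc δ (Real.pi - δ),
      B x t = α * p x t * C x t - (α/(α+1)) * (A x t)^2 + (α+1) * (p x t)^2 := by
    intro x hx
    have h := hpde x hx t htt
    have hfunA : (deriv fun y => p y t) = fun y => A y t := funext fun y => (hA y t).deriv
    rw [(hB' x t).deriv, hfunA, (hAx x t).deriv] at h
    simpa [hderiv1] using h
  -- boundary derivative identities
  have hbd1 : ∀ x, 0 < p x t → deriv (fun y => p y t ^ (α/(α+1))) x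
      = A x t * (α/(α+1)) * p x t ^ (α/(α+1)-1) :=
    fun x hx => ((hA x t).rpow_const (Or.inl hx.ne')).deriv
  have hbd2 : ∀ x, 0 < p x t → deriv (fun τ' => p x τ' ^ (α/(α+1))) t
      = B x t * (α/(α+1)) * p x t ^ (α/(α+1)-1) :=
    fun x hx => ((hB' x t).rpow_const (Or.inl hx.ne')).deriv
  -- second θ-derivative of u
  have hVopen : IsOpen {x : ℝ | 0 < p x t} := isOpen_lt continuous_const cP1t
  have hdd : ∀ x ∈ Icc δ (Real.pi - δ), deriv (deriv (fun y => p y t ^ (α/(α+1)))) x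
      = (α/(α+1))*((α/(α+1))-1)*p x t^((α/(α+1))-2)*(A x t)^2
        + (α/(α+1))*p x t^((α/(α+1))-1)*C x t := by
    intro x hx
    have hev : deriv (fun y => p y t ^ (α/(α+1)))
        =ᶠ[nhds x] (fun y => A y t * (α/(α+1)) * p y t ^ (α/(α+1)-1)) := by
      filter_upwards [hVopen.mem_nhds (hqt x hx)] with y hy
      exact hbd1 y hy
    rw [hev.deriv_eq]
    exact (hw1 x hx).deriv
  -- abbreviations for the integrands (as pointwise expressions)
  -- integrability facts
  have hmemδ : δ ∈ Icc δ (Real.pi - δ) := ⟨le_refl _, hδπ'⟩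
  have hmemπ : Real.pi - δ ∈ Icc δ (Real.pi - δ) := ⟨hδπ', le_refl _⟩
  have contw1 : ContinuousOn (fun y => A y t * (α/(α+1)) * p y t ^ (α/(α+1)-1))
      (Icc δ (Real.pi - δ)) :=
    (cA1t.continuousOn.mul continuousOn_const).mul (hrpt _)
  have contw2 : ContinuousOn (fun y => B y t * (α/(α+1)) * p y t ^ ((α/(α+1))-1))
      (Icc δ (Real.pi - δ)) :=
    (cB1t.continuousOn.mul continuousOn_const).mul (hrpt _)
  have contw11 : ContinuousOn (fun x => (α/(α+1))*((α/(α+1))-1)*p x t^((α/(α+1))-2)*(A x t)^2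
      + (α/(α+1))*p x t^((α/(α+1))-1)*C x t) (Icc δ (Real.pi - δ)) :=
    ((continuousOn_const.mul (hrpt _)).mul (cA1t.pow 2).continuousOn).add
      ((continuousOn_const.mul (hrpt _)).mul cC1t.continuousOn)
  have contw12 : ContinuousOn (fun x => (α/(α+1))*((α/(α+1))-1)*p x t^((α/(α+1))-2)*A x t*B x t
      + (α/(α+1))*p x t^((α/(α+1))-1)*D x t) (Icc δ (Real.pi - δ)) :=
    ((((continuousOn_const.mul (hrpt _)).mul cA1t.continuousOn).mul cB1t.continuousOn)).add
      ((continuousOn_const.mul (hrpt _)).mul cD1t.continuousOn)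
  have contu : ContinuousOn (fun x => p x t ^ (α/(α+1))) (Icc δ (Real.pi - δ)) := hrpt _
  have int_w11 : IntervalIntegrable (fun x => (α/(α+1))*((α/(α+1))-1)*p x t^((α/(α+1))-2)*(A x t)^2
      + (α/(α+1))*p x t^((α/(α+1))-1)*C x t) MeasureTheory.volume δ (Real.pi - δ) :=
    ContinuousOn.intervalIntegrable (by rw [uIcc_of_le hδπ']; exact contw11)
  have int_w12 : IntervalIntegrable (fun x => (α/(α+1))*((α/(α+1))-1)*p x t^((α/(α+1))-2)*A x t*B x t
      + (α/(α+1))*p x t^((α/(α+1))-1)*D x t) MeasureTheory.volume δ (Real.pi - δ) :=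
    ContinuousOn.intervalIntegrable (by rw [uIcc_of_le hδπ']; exact contw12)
  have int_w1w12 : IntervalIntegrable (fun x => (A x t * (α/(α+1)) * p x t ^ (α/(α+1)-1)) *
      ((α/(α+1))*((α/(α+1))-1)*p x t^((α/(α+1))-2)*A x t*B x t
        + (α/(α+1))*p x t^((α/(α+1))-1)*D x t)) MeasureTheory.volume δ (Real.pi - δ) :=
    ContinuousOn.intervalIntegrable (by rw [uIcc_of_le hδπ']; exact contw1.mul contw12)
  have int_uw2 : IntervalIntegrable (fun x => p x t ^ (α/(α+1)) *
      (B x t * (α/(α+1)) * p x t ^ ((α/(α+1))-1))) MeasureTheory.volume δ (Real.pi - δ) :=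
    ContinuousOn.intervalIntegrable (by rw [uIcc_of_le hδπ']; exact contu.mul contw2)
  have int_w11w2 : IntervalIntegrable (fun x =>
      ((α/(α+1))*((α/(α+1))-1)*p x t^((α/(α+1))-2)*(A x t)^2
        + (α/(α+1))*p x t^((α/(α+1))-1)*C x t) *
      (B x t * (α/(α+1)) * p x t ^ ((α/(α+1))-1))) MeasureTheory.volume δ (Real.pi - δ) :=
    ContinuousOn.intervalIntegrable (by rw [uIcc_of_le hδπ']; exact contw11.mul contw2)
  -- step 1: pull out the constant
  have e1 : (∫ θ in δ..(Real.pi - δ), F' θ t)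
      = 2*((α+1)/α)^2 * ∫ θ in δ..(Real.pi - δ),
          ((A θ t * (α/(α+1)) * p θ t ^ (α/(α+1)-1)) *
            ((α/(α+1))*((α/(α+1))-1)*p θ t^((α/(α+1))-2)*A θ t*B θ t
              + (α/(α+1))*p θ t^((α/(α+1))-1)*D θ t)
          - p θ t ^ (α/(α+1)) * (B θ t * (α/(α+1)) * p θ t ^ ((α/(α+1))-1))) := by
    rw [← intervalIntegral.integral_const_mul]
  -- step 2: split the integral
  have e2 : (∫ θ in δ..(Real.pi - δ),
        ((A θ t * (α/(α+1)) * p θ t ^ (α/(α+1)-1)) *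
          ((α/(α+1))*((α/(α+1))-1)*p θ t^((α/(α+1))-2)*A θ t*B θ t
            + (α/(α+1))*p θ t^((α/(α+1))-1)*D θ t)
        - p θ t ^ (α/(α+1)) * (B θ t * (α/(α+1)) * p θ t ^ ((α/(α+1))-1))))
      = (∫ θ in δ..(Real.pi - δ),
          (A θ t * (α/(α+1)) * p θ t ^ (α/(α+1)-1)) *
            ((α/(α+1))*((α/(α+1))-1)*p θ t^((α/(α+1))-2)*A θ t*B θ t
              + (α/(α+1))*p θ t^((α/(α+1))-1)*D θ t))
        - ∫ θ in δ..(Real.pi - δ),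
            p θ t ^ (α/(α+1)) * (B θ t * (α/(α+1)) * p θ t ^ ((α/(α+1))-1)) :=
    intervalIntegral.integral_sub int_w1w12 int_uw2
  -- step 3: integration by parts
  have e3 := intervalIntegral.integral_mul_deriv_eq_deriv_mul
    (u := fun y => A y t * (α/(α+1)) * p y t ^ (α/(α+1)-1))
    (v := fun y => B y t * (α/(α+1)) * p y t ^ ((α/(α+1))-1))
    (u' := fun x => (α/(α+1))*((α/(α+1))-1)*p x t^((α/(α+1))-2)*(A x t)^2
      + (α/(α+1))*p x t^((α/(α+1))-1)*C x t)
    (v' := fun x => (α/(α+1))*((α/(α+1))-1)*p x t^((α/(α+1))-2)*A x t*B x t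
      + (α/(α+1))*p x t^((α/(α+1))-1)*D x t)
    (fun x hx => hw1 x (by rwa [uIcc_of_le hδπ'] at hx))
    (fun x hx => hw2 x (by rwa [uIcc_of_le hδπ'] at hx))
    int_w11 int_w12
  beta_reduce at e3
  -- step 4: combine integrals
  have e4 : (∫ x in δ..(Real.pi - δ),
        ((α/(α+1))*((α/(α+1))-1)*p x t^((α/(α+1))-2)*(A x t)^2
          + (α/(α+1))*p x t^((α/(α+1))-1)*C x t) *
          (B x t * (α/(α+1)) * p x t ^ ((α/(α+1))-1)))
      + (∫ x in δ..(Real.pi - δ),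
          p x t ^ (α/(α+1)) * (B x t * (α/(α+1)) * p x t ^ ((α/(α+1))-1)))
      = ∫ x in δ..(Real.pi - δ),
          ((α/(α+1))*((α/(α+1))-1)*p x t^((α/(α+1))-2)*(A x t)^2
            + (α/(α+1))*p x t^((α/(α+1))-1)*C x t + p x t ^ (α/(α+1))) *
            (B x t * (α/(α+1)) * p x t ^ ((α/(α+1))-1)) := by
    rw [← intervalIntegral.integral_add int_w11w2 int_uw2]
    apply intervalIntegral.integral_congr
    intro x _
    ring
  -- step 5: use the PDE
  have e5 : (∫ x in δ..(Real.pi - δ),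
        ((α/(α+1))*((α/(α+1))-1)*p x t^((α/(α+1))-2)*(A x t)^2
          + (α/(α+1))*p x t^((α/(α+1))-1)*C x t + p x t ^ (α/(α+1))) *
          (B x t * (α/(α+1)) * p x t ^ ((α/(α+1))-1)))
      = α * ∫ x in δ..(Real.pi - δ),
          p x t * ((α/(α+1))*((α/(α+1))-1)*p x t^((α/(α+1))-2)*(A x t)^2
            + (α/(α+1))*p x t^((α/(α+1))-1)*C x t + p x t ^ (α/(α+1)))^2 := by
    rw [← intervalIntegral.integral_const_mul]
    apply intervalIntegral.integral_congr
    intro x hx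
    rw [uIcc_of_le hδπ'] at hx
    have halg := algB α (p x t) (A x t) (B x t) (C x t) hα (hqt x hx) (hPDEx x hx)
    beta_reduce
    rw [halg, mul_assoc]
  -- step 6: identify the integral in the goal
  have e6 : (∫ θ in δ..(Real.pi - δ),
        (p θ t ^ (α/(α+1))) ^ ((α+1)/α) *
          (deriv (deriv (fun x => p x t ^ (α/(α+1)))) θ + p θ t ^ (α/(α+1)))^2)
      = ∫ x in δ..(Real.pi - δ),
          p x t * ((α/(α+1))*((α/(α+1))-1)*p x t^((α/(α+1))-2)*(A x t)^2
            + (α/(α+1))*p x t^((α/(α+1))-1)*C x t + p x t ^ (α/(α+1)))^2 := by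
    apply intervalIntegral.integral_congr
    intro x hx
    rw [uIcc_of_le hδπ'] at hx
    have hne1 : α ≠ 0 := hα.ne'
    have hne2 : (α+1) ≠ 0 := hα1.ne'
    have hpow1 : (p x t ^ (α/(α+1))) ^ ((α+1)/α) = p x t := by
      rw [← Real.rpow_mul (hqt x hx).le]
      rw [show α/(α+1)*((α+1)/α) = 1 by field_simp]
      exact Real.rpow_one _
    beta_reduce
    rw [hpow1, hdd x hx]
  -- final assembly
  rw [hbd1 _ (hqt _ hmemπ), hbd2 _ (hqt _ hmemπ), hbd1 _ (hqt _ hmemδ), hbd2 _ (hqt _ hmemδ),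
    e6, e1, e2, e3]
  linear_combination (2*((α+1)/α)^2) * (e4.trans e5)
end

section
/- Let δ ∈ (0, π/4), and let U, L : [δ, π−δ] → ℝ be C¹ functions with (U + L)(δ) = (U + L)(π − δ) = 0, where L is affine. Then (π/(π−2δ)) ∫_δ^{π−δ}(U'² − U²) dθ + (π/(2δ)) ∫_δ^{π−δ}(L'² + (π/(π−2δ)) L²) dθ ≥ 0. -/
set_option maxHeartbeats 1000000

open Real Set intervalIntegral MeasureTheory

lemma cot_le_inv {t : ℝ} (ht : 0 < t) (ht2 : t < π/2) :
    Real.cos t / Real.sin t ≤ 1 / t := by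
  have hs : 0 < Real.sin t := Real.sin_pos_of_pos_of_lt_pi ht (by linarith [Real.pi_pos])
  have htan := Real.lt_tan ht ht2
  rw [Real.tan_eq_sin_div_cos] at htan
  have hc : 0 < Real.cos t := Real.cos_pos_of_mem_Ioo ⟨by linarith, ht2⟩
  rw [div_le_div_iff₀ hs ht]
  rw [lt_div_iff₀ hc] at htan
  nlinarith

lemma cont_intint {a b : ℝ} (hab : a ≤ b) {f : ℝ → ℝ} (hf : ContinuousOn f (Icc a b)) :
    IntervalIntegrable f volume a b :=
  (hf.mono (by rw [uIcc_of_le hab])).intervalIntegrable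

lemma wirtinger {a b : ℝ} (hab : a < b) {f f' : ℝ → ℝ}
    (hf : ContinuousOn f (Icc a b)) (hf' : ContinuousOn f' (Icc a b))
    (hd : ∀ x ∈ Ioo a b, HasDerivAt f (f' x) x)
    (ha : f a = 0) (hb : f b = 0) :
    0 ≤ ∫ x in a..b, ((f' x)^2 - (π/(b-a))^2 * (f x)^2) := by
  set ℓ := b - a with hℓ
  have hℓ0 : 0 < ℓ := by rw [hℓ]; linarith
  set k := π / ℓ with hk
  have hπ := Real.pi_pos
  have hk0 : 0 < k := div_pos hπ hℓ0
  have hkl : k * ℓ = π := by rw [hk]; field_simp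
  -- sup of |f'|
  obtain ⟨xM, hxM, hxM2⟩ := isCompact_Icc.exists_isMaxOn (nonempty_Icc.2 hab.le)
    (hf'.abs : ContinuousOn (fun x => |f' x|) (Icc a b))
  rw [isMaxOn_iff] at hxM2
  set M := |f' xM| with hM
  have hM0 : 0 ≤ M := abs_nonneg _
  -- sup of |integrand|
  have hGc : ContinuousOn (fun x => (f' x)^2 - k^2 * (f x)^2) (Icc a b) := by
    exact (hf'.pow 2).sub (continuousOn_const.mul (hf.pow 2))
  obtain ⟨xC, hxC, hxC2⟩ := isCompact_Icc.exists_isMaxOn (nonempty_Icc.2 hab.le)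
    (hGc.abs)
  rw [isMaxOn_iff] at hxC2
  set C := |(f' xC)^2 - k^2 * (f xC)^2| with hC
  have hC0 : 0 ≤ C := abs_nonneg _
  -- FTC bounds near endpoints
  have hint : ∀ x ∈ Icc a b, ∀ y ∈ Icc a b, f y - f x = ∫ t in x..y, f' t := by
    intro x hx y hy
    rcases le_total x y with h | h
    · exact (intervalIntegral.integral_eq_sub_of_hasDeriv_right_of_le h
        (hf.mono (Icc_subset_Icc hx.1 hy.2))
        (fun t ht => (hd t ⟨lt_of_le_of_lt hx.1 ht.1, lt_of_lt_of_le ht.2 hy.2⟩).hasDerivWithinAt)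
        (cont_intint h (hf'.mono (Icc_subset_Icc hx.1 hy.2)))).symm
    · have := (intervalIntegral.integral_eq_sub_of_hasDeriv_right_of_le h
        (hf.mono (Icc_subset_Icc hy.1 hx.2))
        (fun t ht => (hd t ⟨lt_of_le_of_lt hy.1 ht.1, lt_of_lt_of_le ht.2 hx.2⟩).hasDerivWithinAt)
        (cont_intint h (hf'.mono (Icc_subset_Icc hy.1 hx.2))))
      rw [intervalIntegral.integral_symm]
      rw [this]; ring
  have hfb : ∀ x ∈ Icc a b, |f x| ≤ M * (x - a) := by
    intro x hx
    have := hint a (left_mem_Icc.2 hab.le) x hx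
    rw [ha, sub_zero] at this
    rw [this]
    have := intervalIntegral.norm_integral_le_of_norm_le_const (C := M) (f := f')
      (a := a) (b := x) (fun t ht => by
        rw [Real.norm_eq_abs]
        refine hxM2 t ⟨?_, ?_⟩
        · rcases mem_uIoc.1 ht with h | h
          · exact le_of_lt h.1
          · linarith [h.1, hx.1]
        · rcases mem_uIoc.1 ht with h | h
          · linarith [h.2, hx.2]
          · linarith [h.2, hx.1])
    rw [Real.norm_eq_abs, abs_of_nonneg (by linarith [hx.1] : (0:ℝ) ≤ x - a)] at this
    exact this
  have hfb' : ∀ x ∈ Icc a b, |f x| ≤ M * (b - x) := by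
    intro x hx
    have h3 := hint x hx b (right_mem_Icc.2 hab.le)
    rw [hb] at h3
    have h2 : |f x| = |∫ t in x..b, f' t| := by
      rw [← h3, zero_sub, abs_neg]
    rw [h2]
    have := intervalIntegral.norm_integral_le_of_norm_le_const (C := M) (f := f')
      (a := x) (b := b) (fun t ht => by
        rw [Real.norm_eq_abs]
        refine hxM2 t ⟨?_, ?_⟩
        · rcases mem_uIoc.1 ht with h | h
          · linarith [h.1, hx.1]
          · linarith [h.1]
        · rcases mem_uIoc.1 ht with h | h
          · linarith [h.2, hx.2]
          · linarith [h.2, hx.2])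
    rw [Real.norm_eq_abs, abs_of_nonneg (by linarith [hx.2] : (0:ℝ) ≤ b - x)] at this
    exact this
  -- the key estimate for every small ε
  set G : ℝ → ℝ := fun x => (f' x)^2 - k^2 * (f x)^2 with hGdef
  have hGint : IntervalIntegrable G volume a b := cont_intint hab.le hGc
  have key : ∀ ε : ℝ, 0 < ε → ε < ℓ/2 → -((2*M^2 + 2*C)*ε) ≤ ∫ x in a..b, G x := by
    intro ε hε0 hε2
    set a' := a + ε with ha'
    set b' := b - ε with hb'
    have haa' : a < a' := by rw [ha']; linarith
    have ha'b' : a' < b' := by rw [ha', hb']; simp only [hℓ] at hε2; linarith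
    have hb'b : b' < b := by rw [hb']; linarith
    have hsub : Icc a' b' ⊆ Ioo a b := fun x hx => ⟨lt_of_lt_of_le haa' hx.1, lt_of_le_of_lt hx.2 hb'b⟩
    have hsubI : Icc a' b' ⊆ Icc a b := fun x hx => Ioo_subset_Icc_self (hsub hx)
    -- positivity of sin on the middle interval
    have hkε : 0 < k * ε := mul_pos hk0 hε0
    have hkεπ : k * ε < π/2 := by
      have : k * ε < k * (ℓ/2) := by exact mul_lt_mul_of_pos_left hε2 hk0
      calc k * ε < k * (ℓ/2) := this
        _ = π/2 := by rw [← hkl]; ring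
    have hs : ∀ x ∈ Icc a' b', 0 < Real.sin (k*(x-a)) := by
      intro x hx
      have h1 : k * ε ≤ k * (x - a) := by
        apply mul_le_mul_of_nonneg_left _ hk0.le
        have := hx.1; rw [ha'] at this; linarith
      have h2 : k * (x - a) ≤ π - k * ε := by
        have := hx.2; rw [hb'] at this
        have h3 : k * (x - a) ≤ k * (ℓ - ε) := by
          apply mul_le_mul_of_nonneg_left _ hk0.le
          rw [hℓ]; linarith
        calc k * (x-a) ≤ k * (ℓ - ε) := h3
          _ = π - k * ε := by rw [← hkl]; ring
      exact Real.sin_pos_of_pos_of_lt_pi (by linarith) (by linarith)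
    -- the comparison function and its derivative
    set φ : ℝ → ℝ := fun x => k * (f x)^2 * (Real.cos (k*(x-a)) / Real.sin (k*(x-a))) with hφdef
    set φ' : ℝ → ℝ := fun x => k * (2 * f x * f' x) * (Real.cos (k*(x-a)) / Real.sin (k*(x-a)))
        + (k * (f x)^2) * (-k / (Real.sin (k*(x-a)))^2) with hφ'def
    have hder : ∀ x ∈ Icc a' b', HasDerivAt φ (φ' x) x := by
      intro x hx
      have hsx : Real.sin (k*(x-a)) ≠ 0 := (hs x hx).ne'
      have hu : HasDerivAt (fun y => k * (y - a)) k x := by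
        simpa using ((hasDerivAt_id x).sub_const a).const_mul k
      have hsin : HasDerivAt (fun y => Real.sin (k*(y-a))) (Real.cos (k*(x-a)) * k) x :=
        (Real.hasDerivAt_sin _).comp x hu
      have hcos : HasDerivAt (fun y => Real.cos (k*(y-a))) (-Real.sin (k*(x-a)) * k) x :=
        (Real.hasDerivAt_cos _).comp x hu
      have hq2 : HasDerivAt (fun y => Real.cos (k*(y-a)) / Real.sin (k*(y-a)))
          (-k / (Real.sin (k*(x-a)))^2) x := by
        have hquot := hcos.div hsin hsx
        have h1 : -Real.sin (k*(x-a)) * k * Real.sin (k*(x-a))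
            - Real.cos (k*(x-a)) * (Real.cos (k*(x-a)) * k) = -k := by
          linear_combination (-k) * Real.sin_sq_add_cos_sq (k*(x-a))
        rw [h1] at hquot; exact hquot
      have hf2 : HasDerivAt (fun y => k * (f y)^2) (k * (2 * f x * f' x)) x := by
        have := ((hd x (hsub hx)).pow 2).const_mul k
        simpa using this
      exact hf2.mul hq2
    -- continuity of φ'
    have hsinc : ContinuousOn (fun x => Real.sin (k*(x-a))) (Icc a' b') := by fun_prop
    have hcosc : ContinuousOn (fun x => Real.cos (k*(x-a))) (Icc a' b') := by fun_prop
    have hφ'c : ContinuousOn φ' (Icc a' b') := by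
      rw [hφ'def]
      apply ContinuousOn.add
      · apply ContinuousOn.mul
        · exact continuousOn_const.mul
            ((continuousOn_const.mul (hf.mono hsubI)).mul (hf'.mono hsubI))
        · exact hcosc.div hsinc (fun x hx => (hs x hx).ne')
      · apply ContinuousOn.mul
        · exact continuousOn_const.mul ((hf.mono hsubI).pow 2)
        · exact continuousOn_const.div (hsinc.pow 2)
            (fun x hx => pow_ne_zero 2 (hs x hx).ne')
    have hφ'int : IntervalIntegrable φ' volume a' b' := cont_intint ha'b'.le hφ'c
    -- FTC on the middle interval
    have hFTC : ∫ x in a'..b', φ' x = φ b' - φ a' := by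
      apply intervalIntegral.integral_eq_sub_of_hasDerivAt
      · intro x hx
        exact hder x (by rwa [uIcc_of_le ha'b'.le] at hx)
      · exact hφ'int
    -- pointwise inequality φ' ≤ G on the middle interval
    have hptwise : ∀ x ∈ Icc a' b', φ' x ≤ G x := by
      intro x hx
      have hsx : Real.sin (k*(x-a)) ≠ 0 := (hs x hx).ne'
      have h1 : Real.sin (k*(x-a))^2 + Real.cos (k*(x-a))^2 = 1 := Real.sin_sq_add_cos_sq _
      rw [hφ'def, hGdef]
      set s := Real.sin (k*(x-a))
      set c := Real.cos (k*(x-a))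
      have keyid : ((f' x)^2 - k^2 * (f x)^2)
          - (k * (2 * f x * f' x) * (c / s) + (k * (f x)^2) * (-k / s^2))
          = (f' x - k * f x * (c / s))^2 := by
        linear_combination (-(k^2*(f x)^2)/s^2) * h1 + (k^2*(f x)^2) * (mul_inv_cancel₀ (pow_ne_zero 2 hsx))
      simp only
      nlinarith [sq_nonneg (f' x - k * f x * (c / s))]
    have hGint' : IntervalIntegrable G volume a' b' :=
      cont_intint ha'b'.le (hGc.mono hsubI)
    have hmid : φ b' - φ a' ≤ ∫ x in a'..b', G x := by
      rw [← hFTC]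
      exact intervalIntegral.integral_mono_on ha'b'.le hφ'int hGint' hptwise
    -- bounds on φ at the two inner endpoints
    have hcotbd : Real.cos (k*ε) / Real.sin (k*ε) ≤ 1 / (k*ε) := cot_le_inv hkε hkεπ
    have hcotnn : 0 ≤ Real.cos (k*ε) / Real.sin (k*ε) := by
      apply div_nonneg
      · exact Real.cos_nonneg_of_mem_Icc ⟨by linarith [Real.pi_pos], hkεπ.le⟩
      · exact (Real.sin_pos_of_pos_of_lt_pi hkε (by linarith [Real.pi_pos])).le
    have hfa' : (f a')^2 ≤ (M*ε)^2 := by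
      have h1 := hfb a' (hsubI (left_mem_Icc.2 ha'b'.le))
      have h2 : a' - a = ε := by rw [ha']; ring
      rw [h2] at h1
      calc (f a')^2 = |f a'|^2 := (sq_abs _).symm
        _ ≤ (M*ε)^2 := by
            apply pow_le_pow_left₀ (abs_nonneg _) h1
    have hfb'2 : (f b')^2 ≤ (M*ε)^2 := by
      have h1 := hfb' b' (hsubI (right_mem_Icc.2 ha'b'.le))
      have h2 : b - b' = ε := by rw [hb']; ring
      rw [h2] at h1
      calc (f b')^2 = |f b'|^2 := (sq_abs _).symm
        _ ≤ (M*ε)^2 := by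
            apply pow_le_pow_left₀ (abs_nonneg _) h1
    have hεne : (k*ε) ≠ 0 := hkε.ne'
    have hφa : φ a' ≤ M^2 * ε := by
      rw [hφdef]
      simp only
      have e1 : k * (a' - a) = k * ε := by rw [ha']; ring
      rw [e1]
      calc k * (f a')^2 * (Real.cos (k*ε) / Real.sin (k*ε))
          ≤ k * (M*ε)^2 * (1/(k*ε)) := by
            apply mul_le_mul
            · exact mul_le_mul_of_nonneg_left hfa' hk0.le
            · exact hcotbd
            · exact hcotnn
            · positivity
        _ = M^2 * ε := by field_simp
    have hφb : -(M^2 * ε) ≤ φ b' := by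
      rw [hφdef]
      simp only
      have e1 : k * (b' - a) = π - k * ε := by
        rw [hb']
        have : b - ε - a = ℓ - ε := by rw [hℓ]; ring
        rw [this, ← hkl]; ring
      rw [e1, Real.cos_pi_sub, Real.sin_pi_sub]
      have : k * (f b')^2 * (-Real.cos (k*ε) / Real.sin (k*ε))
          = -(k * (f b')^2 * (Real.cos (k*ε) / Real.sin (k*ε))) := by ring
      rw [this]
      apply neg_le_neg
      calc k * (f b')^2 * (Real.cos (k*ε) / Real.sin (k*ε))
          ≤ k * (M*ε)^2 * (1/(k*ε)) := by
            apply mul_le_mul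
            · exact mul_le_mul_of_nonneg_left hfb'2 hk0.le
            · exact hcotbd
            · exact hcotnn
            · positivity
        _ = M^2 * ε := by field_simp
    -- tail bounds
    have htail : ∀ c d : ℝ, a ≤ c → c ≤ d → d ≤ b → |d - c| ≤ ε →
        -(C*ε) ≤ ∫ x in c..d, G x := by
      intro c d hac hcd hdb hdc
      have hb1 := intervalIntegral.norm_integral_le_of_norm_le_const (C := C)
        (f := G) (a := c) (b := d) (fun t ht => by
          rw [Real.norm_eq_abs]
          rw [uIoc_of_le hcd] at ht
          exact hxC2 t ⟨le_trans hac ht.1.le, le_trans ht.2 hdb⟩)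
      rw [Real.norm_eq_abs] at hb1
      have hb2 : |∫ x in c..d, G x| ≤ C * ε := by
        calc |∫ x in c..d, G x| ≤ C * |d - c| := hb1
          _ ≤ C * ε := mul_le_mul_of_nonneg_left hdc hC0
      linarith [neg_abs_le (∫ x in c..d, G x)]
    have ht1 : -(C*ε) ≤ ∫ x in a..a', G x :=
      htail a a' le_rfl haa'.le (by linarith) (by rw [ha']; simp [abs_of_nonneg hε0.le])
    have ht2 : -(C*ε) ≤ ∫ x in b'..b, G x :=
      htail b' b (by linarith) hb'b.le le_rfl
        (by rw [hb', show b - (b - ε) = ε by ring, abs_of_nonneg hε0.le])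
    -- splitting the integral
    have hi1 : IntervalIntegrable G volume a a' :=
      hGint.mono_set (by rw [uIcc_of_le hab.le, uIcc_of_le haa'.le]; exact Icc_subset_Icc le_rfl (by linarith))
    have hi2 : IntervalIntegrable G volume a' b' :=
      hGint.mono_set (by rw [uIcc_of_le hab.le, uIcc_of_le ha'b'.le]; exact Icc_subset_Icc (by linarith) (by linarith))
    have hi3 : IntervalIntegrable G volume b' b :=
      hGint.mono_set (by rw [uIcc_of_le hab.le, uIcc_of_le hb'b.le]; exact Icc_subset_Icc (by linarith) le_rfl)
    have hsplit2 : ∫ x in a'..b, G x = (∫ x in a'..b', G x) + ∫ x in b'..b, G x :=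
      (intervalIntegral.integral_add_adjacent_intervals hi2 hi3).symm
    have hi23 : IntervalIntegrable G volume a' b :=
      hGint.mono_set (by rw [uIcc_of_le hab.le, uIcc_of_le (by linarith : a' ≤ b)]; exact Icc_subset_Icc (by linarith) le_rfl)
    have hsplit1 : ∫ x in a..b, G x = (∫ x in a..a', G x) + ∫ x in a'..b, G x :=
      (intervalIntegral.integral_add_adjacent_intervals hi1 hi23).symm
    rw [hsplit1, hsplit2]
    have : -(M^2*ε) - (M^2*ε) ≤ ∫ x in a'..b', G x := by
      have := hmid
      linarith
    linarith
  -- conclude by letting ε → 0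
  by_contra hcon
  push_neg at hcon
  set I := ∫ x in a..b, G x with hI
  set K := 2*M^2 + 2*C with hK
  have hK0 : 0 ≤ K := by rw [hK]; positivity
  have hK1 : (0:ℝ) < K + 1 := by linarith
  set ε := min (ℓ/4) (-I/(K+1)) with hε
  have hε0 : 0 < ε := by
    apply lt_min (by linarith)
    apply div_pos (by linarith) hK1
  have hεl : ε < ℓ/2 := lt_of_le_of_lt (min_le_left _ _) (by linarith)
  have hεI : ε ≤ -I/(K+1) := min_le_right _ _
  have hεI2 : ε * (K+1) ≤ -I := by
    rw [← le_div_iff₀ hK1]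
    exact hεI
  have := key ε hε0 hεl
  nlinarith

theorem stmt17 (δ : ℝ) (hδ : δ ∈ Set.Ioo 0 (Real.pi/4))
    (U L : ℝ → ℝ)
    (hU : ContDiffOn ℝ 1 U (Set.Icc δ (Real.pi - δ)))
    (hL : ∃ a b : ℝ, ∀ x, L x = a * x + b)
    (h0 : U δ + L δ = 0) (h1 : U (Real.pi - δ) + L (Real.pi - δ) = 0) :
    0 ≤ (Real.pi / (Real.pi - 2*δ)) *
          (∫ θ in δ..(Real.pi - δ), ((deriv U θ)^2 - (U θ)^2))
        + (Real.pi / (2*δ)) *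
          (∫ θ in δ..(Real.pi - δ),
            ((deriv L θ)^2 + (Real.pi / (Real.pi - 2*δ)) * (L θ)^2)) := by
  obtain ⟨hδ0, hδπ⟩ := hδ
  have hπ := Real.pi_pos
  set a : ℝ := δ with hadef
  set b : ℝ := π - δ with hbdef
  have hab : a < b := by rw [hadef, hbdef]; linarith
  obtain ⟨a0, b0, hLf⟩ := hL
  have hLeq : L = fun x => a0 * x + b0 := funext hLf
  subst hLeq
  beta_reduce at h0 h1 ⊢
  -- derivative of L
  have hLd : ∀ x : ℝ, HasDerivAt (fun x => a0 * x + b0) a0 x := by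
    intro x
    simpa using ((hasDerivAt_id x).const_mul a0).add_const b0
  have hLderiv : ∀ x : ℝ, deriv (fun x => a0 * x + b0) x = a0 := fun x => (hLd x).deriv
  -- derivative of U
  set g : ℝ → ℝ := fun x => derivWithin U (Icc a b) x with hgdef
  have hgc : ContinuousOn g (Icc a b) :=
    hU.continuousOn_derivWithin (uniqueDiffOn_Icc hab) le_rfl
  have hgd : ∀ x ∈ Ioo a b, HasDerivAt U (g x) x := by
    intro x hx
    have h1 : DifferentiableWithinAt ℝ U (Icc a b) x :=
      (hU.differentiableOn one_ne_zero) x (Ioo_subset_Icc_self hx)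
    exact h1.hasDerivWithinAt.hasDerivAt (Icc_mem_nhds hx.1 hx.2)
  have hUc : ContinuousOn U (Icc a b) := hU.continuousOn
  have hLc : ContinuousOn (fun x => a0 * x + b0) (Icc a b) := by fun_prop
  -- shorthand integrals
  set I1 : ℝ := ∫ x in a..b, (g x)^2 with hI1
  set I2 : ℝ := ∫ x in a..b, (U x)^2 with hI2
  set X : ℝ := ∫ x in a..b, U x * (a0 * x + b0) with hX
  set J2 : ℝ := ∫ x in a..b, (a0 * x + b0)^2 with hJ2
  set IG : ℝ := ∫ x in a..b, g x with hIG
  -- integrabilities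
  have int1 : IntervalIntegrable (fun x => (g x)^2) volume a b := cont_intint hab.le (hgc.pow 2)
  have int2 : IntervalIntegrable (fun x => (U x)^2) volume a b := cont_intint hab.le (hUc.pow 2)
  have intX : IntervalIntegrable (fun x => U x * (a0 * x + b0)) volume a b :=
    cont_intint hab.le (hUc.mul hLc)
  have intJ2 : IntervalIntegrable (fun x => (a0 * x + b0)^2) volume a b :=
    cont_intint hab.le (hLc.pow 2)
  have intG : IntervalIntegrable g volume a b := cont_intint hab.le hgc
  -- constants
  set ℓ : ℝ := π - 2*δ with hℓdef
  have hba : b - a = ℓ := by rw [hadef, hbdef, hℓdef]; ring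
  have hℓ0 : 0 < ℓ := by rw [hℓdef]; linarith
  have hℓπ : ℓ < π := by rw [hℓdef]; linarith
  set k : ℝ := π / ℓ with hkdef
  have hk0 : 0 < k := div_pos hπ hℓ0
  -- FTC for g
  have hFTC : IG = U b - U a := by
    rw [hIG]
    exact intervalIntegral.integral_eq_sub_of_hasDeriv_right_of_le hab.le hUc
      (fun x hx => (hgd x hx).hasDerivWithinAt) intG
  have hUa : U a = -(a0 * a + b0) := by linarith [h0]
  have hUb : U b = -(a0 * b + b0) := by linarith [h1]

  have hIGval : IG = a0 * (a - b) := by rw [hFTC, hUa, hUb]; ring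
  -- Wirtinger for f = U + L
  have hW := wirtinger hab (f := fun x => U x + (a0 * x + b0)) (f' := fun x => g x + a0)
    (hUc.add hLc) (hgc.add continuousOn_const)
    (fun x hx => (hgd x hx).add (hLd x))
    (by simpa using h0) (by simpa using h1)
  rw [hba] at hW
  -- expand the Wirtinger integral
  have hsplit : (∫ x in a..b, ((g x + a0)^2 - (π/ℓ)^2 * (U x + (a0 * x + b0))^2))
      = I1 + 2*a0*IG + a0^2*(b-a) - k^2*I2 - 2*k^2*X - k^2*J2 := by
    have e : ∀ x : ℝ, (g x + a0)^2 - (π/ℓ)^2 * (U x + (a0 * x + b0))^2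
        = (g x)^2 + ((2*a0) * g x + (a0^2 + ((-(k^2)) * (U x)^2
          + ((-(2*k^2)) * (U x * (a0 * x + b0)) + (-(k^2)) * (a0 * x + b0)^2)))) := by
      intro x; rw [hkdef]; ring
    simp only [e]
    rw [intervalIntegral.integral_add int1 ((intG.const_mul _).add ((_root_.intervalIntegrable_const).add
      ((int2.const_mul _).add ((intX.const_mul _).add (intJ2.const_mul _)))))]
    rw [intervalIntegral.integral_add (intG.const_mul _) ((_root_.intervalIntegrable_const).add
      ((int2.const_mul _).add ((intX.const_mul _).add (intJ2.const_mul _))))]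
    rw [intervalIntegral.integral_add (_root_.intervalIntegrable_const)
      ((int2.const_mul _).add ((intX.const_mul _).add (intJ2.const_mul _)))]
    rw [intervalIntegral.integral_add (int2.const_mul _) ((intX.const_mul _).add (intJ2.const_mul _))]
    rw [intervalIntegral.integral_add (intX.const_mul _) (intJ2.const_mul _)]
    rw [intervalIntegral.integral_const_mul, intervalIntegral.integral_const_mul,
      intervalIntegral.integral_const_mul, intervalIntegral.integral_const_mul,
      intervalIntegral.integral_const]
    rw [← hI1, ← hI2, ← hX, ← hJ2, ← hIG]
    simp only [smul_eq_mul]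
    ring
  rw [hsplit] at hW
  -- Young's inequality via the square integral
  set η : ℝ := (π^2 - ℓ^2)/π^2 with hηdef
  have hη0 : 0 < η := by
    rw [hηdef]
    apply div_pos _ (by positivity)
    nlinarith only [hℓ0, hℓπ, hπ]
  have hYoung : 0 ≤ η^2*I2 + 2*η*X + J2 := by
    have h1 : (0:ℝ) ≤ ∫ x in a..b, (η * U x + (a0 * x + b0))^2 := by
      apply intervalIntegral.integral_nonneg hab.le
      intro x _; positivity
    have h2 : (∫ x in a..b, (η * U x + (a0 * x + b0))^2)
        = η^2*I2 + 2*η*X + J2 := by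
      have e : ∀ x : ℝ, (η * U x + (a0 * x + b0))^2
          = (η^2) * (U x)^2 + ((2*η) * (U x * (a0 * x + b0)) + (a0 * x + b0)^2) := by
        intro x; ring
      simp only [e]
      rw [intervalIntegral.integral_add (int2.const_mul _) ((intX.const_mul _).add intJ2)]
      rw [intervalIntegral.integral_add (intX.const_mul _) intJ2]
      rw [intervalIntegral.integral_const_mul, intervalIntegral.integral_const_mul]
      rw [← hI2, ← hX, ← hJ2]; ring
    linarith only [h2 ▸ h1]
  -- nonnegativity
  have hI2nn : 0 ≤ I2 := intervalIntegral.integral_nonneg hab.le (fun x _ => sq_nonneg _)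
  have hJ2nn : 0 ≤ J2 := intervalIntegral.integral_nonneg hab.le (fun x _ => sq_nonneg _)
  clear_value I1 I2 X J2 IG ℓ k η
  have hgoal1 : (∫ θ in a..b, ((deriv U θ)^2 - (U θ)^2)) = I1 - I2 := by
    have hae : ∀ᵐ θ ∂(volume : Measure ℝ), θ ∈ Set.uIoc a b → (deriv U θ)^2 - (U θ)^2 = (g θ)^2 - (U θ)^2 := by
      have hbn : ∀ᵐ θ ∂(volume : Measure ℝ), θ ≠ b := by
        rw [MeasureTheory.ae_iff]
        convert Real.volume_singleton (a := b) using 2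
        ext x; simp
      filter_upwards [hbn] with θ hθ hmem
      rw [uIoc_of_le hab.le] at hmem
      have hθIoo : θ ∈ Ioo a b := ⟨hmem.1, lt_of_le_of_ne hmem.2 hθ⟩
      rw [(hgd θ hθIoo).deriv]
    rw [intervalIntegral.integral_congr_ae hae]
    rw [intervalIntegral.integral_sub int1 int2, ← hI1, ← hI2]
  have hgoal2 : (∫ θ in a..b, ((deriv (fun x => a0 * x + b0) θ)^2
        + k * (a0 * θ + b0)^2))
      = a0^2 * ℓ + k * J2 := by
    have e : ∀ θ : ℝ, (deriv (fun x => a0 * x + b0) θ)^2 + k * (a0 * θ + b0)^2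
        = a0^2 + k * (a0 * θ + b0)^2 := by
      intro θ; rw [hLderiv θ]
    simp only [e]
    rw [intervalIntegral.integral_add _root_.intervalIntegrable_const (intJ2.const_mul _)]
    rw [intervalIntegral.integral_const_mul, intervalIntegral.integral_const, ← hJ2]
    simp only [smul_eq_mul]
    rw [hba]; ring
  rw [hgoal1, hgoal2]
  -- final arithmetic
  have hη1 : k^2 * (1 - η) = 1 := by
    rw [hηdef, hkdef]
    field_simp
    ring
  have hηne : η ≠ 0 := ne_of_gt hη0
  have hkη : k^2 - k^2/η = -(1/η) := by
    have h9 : (k^2 - k^2/η)*η = -1 := by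
      have h8 : k^2*η - k^2 = -1 := by linear_combination -hη1
      calc (k^2 - k^2/η)*η = k^2*η - (k^2/η)*η := by ring
        _ = k^2*η - k^2 := by rw [div_mul_cancel₀ _ hηne]
        _ = -1 := h8
    have h10 := (eq_div_iff hηne).mpr h9
    rw [h10, neg_div]
  have h5 : a - b = -ℓ := by linarith only [hba]
  have hIGsq : 2*a0*IG + a0^2*(b-a) = -(a0^2 * ℓ) := by
    rw [hIGval, h5, hba]; ring
  -- from Young: 2*k^2*X ≥ -k^2*η*I2 - (k^2/η)*J2
  have hY2 : -(k^2*η*I2) - (k^2/η)*J2 ≤ 2*k^2*X := by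
    have h3 : 0 ≤ (k^2/η) * (η^2*I2 + 2*η*X + J2) := by
      apply mul_nonneg (div_nonneg (sq_nonneg k) hη0.le) hYoung
    have h4 : (k^2/η) * (η^2*I2 + 2*η*X + J2)
        = k^2*η*I2 + 2*k^2*X + (k^2/η)*J2 := by
      field_simp
    linarith only [h4 ▸ h3]
  -- from Wirtinger
  have hW2 : a0^2*ℓ + k^2*I2 + 2*k^2*X + k^2*J2 ≤ I1 := by linarith only [hW, hIGsq]
  have e1 : k^2*I2 - k^2*η*I2 = I2 := by linear_combination I2 * hη1
  have e2 : k^2*J2 - (k^2/η)*J2 = -(1/η)*J2 := by linear_combination J2 * hkη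
  have hstep : a0^2*ℓ - (1/η)*J2 ≤ I1 - I2 := by linarith only [hW2, hY2, e1, e2]
  -- coefficient inequality : 1/η ≤ π/(2δ)
  have h2δ : (0:ℝ) < 2*δ := by linarith
  have hπη : π * η = (π^2 - ℓ^2)/π := by rw [hηdef]; field_simp
  have h2δπη : 2*δ ≤ π * η := by
    rw [hπη, le_div_iff₀ hπ, hℓdef]
    nlinarith only [hδ0, hδπ, hπ, mul_pos hδ0 (show (0:ℝ) < π - 2*δ by linarith only [hδπ, hπ])]
  have hcoef : 1/η ≤ π/(2*δ) := by
    rw [div_le_div_iff₀ hη0 h2δ]; linarith only [h2δπη]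
  have hδpos : 0 < π/(2*δ) := by positivity
  have hfin1 := mul_le_mul_of_nonneg_left hstep hk0.le
  have hfin2 : 0 ≤ k*J2*(π/(2*δ) - 1/η) :=
    mul_nonneg (mul_nonneg hk0.le hJ2nn) (sub_nonneg.2 hcoef)
  have hfin3 : 0 ≤ (k + π/(2*δ)) * (a0^2*ℓ) :=
    mul_nonneg (by positivity) (mul_nonneg (sq_nonneg a0) hℓ0.le)
  linarith only [hfin1, hfin2, hfin3]
end
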